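/- Let I ⊂ 𝕋 be open with σ(closure(I)) < 1, let K = ((𝕋∖I) × {0}) ∪ (closure(I) × 𝕋), and let p = (z₀, w₀) with z₀ ∈ 𝔻 ∖ closure(I) and |w₀| > 0, |z₀| ≤ 1, |w₀| ≤ 1. Then p is not in the polynomially convex hull of K: there exists a polynomial Q ∈ ℂ[z,w] with |Q| ≤ 1 on K and |Q(p)| > 1. -/

import Mathlib

open Complex MeasureTheory Metric Set Filter Topology

/-- Normalized arclength (Haar) measure on the unit circle `𝕋 ⊂ ℂ`. -/
noncomputable def sigmaT : Measure ℂ :=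
  (ENNReal.ofReal (2 * Real.pi))⁻¹ •
    Measure.map (fun θ : ℝ => Complex.exp (θ * Complex.I))
      (volume.restrict (Set.Ico (0 : ℝ) (2 * Real.pi)))


open Polynomial
open scoped ENNReal NNReal

lemma transfer (P : Polynomial ℂ) (v : Fin 2 → ℂ) :
    MvPolynomial.eval v (Polynomial.aeval (MvPolynomial.X 0) P) = Polynomial.eval (v 0) P := by
  induction P using Polynomial.induction_on with
  | C a => simp
  | add p q hp hq => simp [hp, hq]
  | monomial n a h => simp_all [pow_succ, mul_assoc]

lemma sigmaT_sphere : sigmaT (sphere (0:ℂ) 1) = 1 := by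
  have hmeas : Measurable fun θ : ℝ => Complex.exp (θ * Complex.I) := by fun_prop
  rw [sigmaT, Measure.smul_apply, Measure.map_apply hmeas (isClosed_sphere.measurableSet)]
  have : (fun θ : ℝ => Complex.exp (θ * Complex.I)) ⁻¹' sphere (0:ℂ) 1 = Set.univ := by
    ext θ
    simp [mem_sphere_iff_norm, Complex.norm_exp_ofReal_mul_I]
  rw [this, Measure.restrict_apply MeasurableSet.univ, Set.univ_inter, Real.volume_Ico]
  simp only [sub_zero, smul_eq_mul]
  rw [ENNReal.inv_mul_cancel (by positivity) ENNReal.ofReal_ne_top]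


lemma peak_case (E : Set ℂ) (hE : E ⊆ sphere (0:ℂ) 1) (hEc : IsClosed E)
    (z₀ : ℂ) (hz₀ : ‖z₀‖ = 1) (hz₀E : z₀ ∉ E) (M : ℝ) :
    ∃ P : Polynomial ℂ, (∀ z ∈ E, ‖P.eval z‖ ≤ 1) ∧ M < ‖P.eval z₀‖ := by
  set A : ℝ := max M 0 + 1 with hA
  have hApos : 0 < A := by positivity
  have hMA : M < A := by simp only [hA]; nlinarith [le_max_left M 0]
  rcases E.eq_empty_or_nonempty with rfl | hne
  · refine ⟨Polynomial.C (A:ℂ), by simp, ?_⟩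
    simp only [Polynomial.eval_C, Complex.norm_real, Real.norm_eq_abs, abs_of_pos hApos]
    exact hMA
  have hδpos : 0 < infDist z₀ E := (hEc.notMem_iff_infDist_pos hne).mp hz₀E
  set δ := infDist z₀ E
  set c : ℝ := Real.sqrt (max 0 (1 - δ^2/4)) with hc
  have hc0 : 0 ≤ c := Real.sqrt_nonneg _
  have hc1 : c < 1 := by
    rw [hc]
    have : max 0 (1 - δ^2/4) < 1 := by
      rcases le_or_gt (1 - δ^2/4) 0 with h | h
      · simpa [max_eq_left h] using one_pos
      · rw [max_eq_right h.le]; nlinarith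
    rw [show (1:ℝ) = Real.sqrt 1 by simp]
    exact Real.sqrt_lt_sqrt (le_max_left 0 _) (by simpa using this)
  have hc1' : c ≠ 1 := ne_of_lt hc1
  -- bound on E
  have hbound : ∀ z ∈ E, ‖(2:ℂ)⁻¹ * (1 + (starRingEnd ℂ) z₀ * z)‖ ≤ c := by
    intro z hz
    have hzn : ‖z‖ = 1 := by simpa [mem_sphere_iff_norm] using hE hz
    have hpar := parallelogram_law_with_norm ℂ z₀ z
    have hdist : δ ≤ ‖z₀ - z‖ := by
      simpa [dist_eq_norm] using infDist_le_dist_of_mem hz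
    have hsum : ‖z₀ + z‖^2 ≤ 4 - δ^2 := by
      rw [hz₀, hzn] at hpar
      nlinarith [norm_nonneg (z₀ - z), norm_nonneg (z₀ + z)]
    have heq : (2:ℂ)⁻¹ * (1 + (starRingEnd ℂ) z₀ * z) = (2:ℂ)⁻¹ * (starRingEnd ℂ) z₀ * (z₀ + z) := by
      have : (starRingEnd ℂ) z₀ * z₀ = 1 := by
        rw [mul_comm, Complex.mul_conj]
        norm_cast
        rw [← Complex.sq_norm, hz₀]; norm_num
      linear_combination (-(2:ℂ)⁻¹) * this
    rw [heq]
    have : ‖(2:ℂ)⁻¹ * (starRingEnd ℂ) z₀ * (z₀ + z)‖ = 2⁻¹ * ‖z₀ + z‖ := by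
      simp [norm_mul, RCLike.norm_conj, hz₀]
    rw [this, hc]
    rw [show (2:ℝ)⁻¹ * ‖z₀ + z‖ = Real.sqrt ((2⁻¹ * ‖z₀+z‖)^2) by
      rw [Real.sqrt_sq (by positivity)]]
    apply Real.sqrt_le_sqrt
    have : (2⁻¹ * ‖z₀+z‖)^2 = ‖z₀+z‖^2/4 := by ring
    rw [this]
    rcases le_or_gt (1 - δ^2/4) 0 with h | h
    · nlinarith [norm_nonneg (z₀+z), le_max_left (0:ℝ) (1 - δ^2/4)]
    · nlinarith [le_max_right (0:ℝ) (1 - δ^2/4)]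
  -- choose n
  obtain ⟨n, hn⟩ : ∃ n, c^n ≤ A⁻¹ := by
    exact ((tendsto_pow_atTop_nhds_zero_of_lt_one hc0 hc1).eventually_le_const
      (by positivity : (0:ℝ) < A⁻¹)).exists
  refine ⟨Polynomial.C (A:ℂ) * (Polynomial.C (2:ℂ)⁻¹ * (1 + Polynomial.C ((starRingEnd ℂ) z₀) * Polynomial.X))^n, ?_, ?_⟩
  · intro z hz
    have := hbound z hz
    simp only [eval_mul, eval_pow, eval_add, eval_one, eval_C, eval_X]
    have hnA : ‖(A:ℂ)‖ = A := by
      rw [Complex.norm_real, Real.norm_eq_abs, abs_of_pos hApos]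
    rw [norm_mul, norm_pow, hnA]
    calc A * ‖(2:ℂ)⁻¹ * (1 + (starRingEnd ℂ) z₀ * z)‖^n ≤ A * c^n := by
          exact mul_le_mul_of_nonneg_left (pow_le_pow_left₀ (norm_nonneg _) this n) hApos.le
      _ ≤ A * A⁻¹ := mul_le_mul_of_nonneg_left hn hApos.le
      _ = 1 := mul_inv_cancel₀ hApos.ne'
  · have : (starRingEnd ℂ) z₀ * z₀ = 1 := by
      rw [mul_comm, Complex.mul_conj]
      norm_cast
      rw [← Complex.sq_norm, hz₀]; norm_num
    simp only [eval_mul, eval_pow, eval_add, eval_one, eval_C, eval_X, this]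
    norm_num [Complex.norm_real]
    rwa [abs_of_pos hApos]


lemma normSq_key (a z : ℂ) :
    Complex.normSq (1 - a * z) - Complex.normSq (z - (starRingEnd ℂ) a) =
      (1 - Complex.normSq a) * (1 - Complex.normSq z) := by
  simp only [Complex.normSq_apply, Complex.sub_re, Complex.sub_im, Complex.one_re, Complex.one_im,
    Complex.mul_re, Complex.mul_im, Complex.conj_re, Complex.conj_im]
  ring

lemma normSq_norm (z : ℂ) : Complex.normSq z = ‖z‖ ^ 2 := by
  rw [← Complex.sq_norm]

lemma mobius_bound {z₀ z : ℂ} (hz₀ : ‖z₀‖ ≤ 1) (hz : ‖z‖ ≤ 1) :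
    ‖z - z₀‖ ≤ ‖1 - (starRingEnd ℂ) z₀ * z‖ := by
  have h := normSq_key ((starRingEnd ℂ) z₀) z
  rw [Complex.conj_conj, Complex.normSq_conj] at h
  have hge : Complex.normSq (z - z₀) ≤ Complex.normSq (1 - (starRingEnd ℂ) z₀ * z) := by
    rw [normSq_norm z₀, normSq_norm z] at h
    have h1 : (0:ℝ) ≤ 1 - ‖z₀‖ ^ 2 := by nlinarith [norm_nonneg z₀]
    have h2 : (0:ℝ) ≤ 1 - ‖z‖ ^ 2 := by nlinarith [norm_nonneg z]
    nlinarith [mul_nonneg h1 h2]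
  rw [normSq_norm, normSq_norm] at hge
  nlinarith [norm_nonneg (z - z₀), norm_nonneg (1 - (starRingEnd ℂ) z₀ * z)]

-- on the unit circle the Möbius map has modulus one
lemma mobius_sphere {z₀ z : ℂ} (hz : ‖z‖ = 1) :
    ‖z - z₀‖ = ‖1 - (starRingEnd ℂ) z₀ * z‖ := by
  have h := normSq_key ((starRingEnd ℂ) z₀) z
  rw [Complex.conj_conj, Complex.normSq_conj, normSq_norm z, hz] at h
  rw [normSq_norm, normSq_norm] at h
  simp only [one_pow, sub_self, mul_zero] at h
  nlinarith [norm_nonneg (z - z₀), norm_nonneg (1 - (starRingEnd ℂ) z₀ * z)]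

lemma re_cayley {u : ℂ} (hu : u ≠ 1) :
    ((1 + u)/(1 - u)).re = (1 - Complex.normSq u)/Complex.normSq (1 - u) := by
  rw [Complex.div_re]
  simp only [Complex.add_re, Complex.one_re, Complex.add_im, Complex.one_im, Complex.sub_re,
    Complex.sub_im]
  rw [← add_div]
  congr 1
  simp only [Complex.normSq_apply]
  ring

set_option maxHeartbeats 2000000 in
lemma interior_case (E : Set ℂ) (hE : E ⊆ sphere (0:ℂ) 1) (hEc : IsClosed E)
    (ξ : ℂ) (hξs : ‖ξ‖ = 1) (hξE : ξ ∉ E)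
    (z₀ : ℂ) (hz₀ : ‖z₀‖ < 1) (M : ℝ) :
    ∃ P : Polynomial ℂ, (∀ z ∈ E, ‖P.eval z‖ ≤ 1) ∧ M < ‖P.eval z₀‖ := by
  set A : ℝ := max M 0 + 1 with hA
  have hApos : 0 < A := by positivity
  have hMA : M < A := by simp only [hA]; nlinarith [le_max_left M 0]
  set a : ℂ := (starRingEnd ℂ) z₀ with ha
  have hna : ‖a‖ = ‖z₀‖ := by rw [ha]; exact RCLike.norm_conj z₀
  -- denominator never vanishes on the closed disk
  have hden : ∀ z : ℂ, ‖z‖ ≤ 1 → 1 - a * z ≠ 0 := by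
    intro z hz h
    have : ‖a * z‖ = 1 := by
      have : a * z = 1 := by linear_combination -h
      rw [this, norm_one]
    rw [norm_mul, hna] at this
    nlinarith [norm_nonneg z, norm_nonneg z₀]
  set b : ℂ → ℂ := fun z => (z - z₀)/(1 - a * z) with hb
  have hb1 : ∀ z : ℂ, ‖z‖ = 1 → ‖b z‖ = 1 := by
    intro z hz
    have hzz0 : z ≠ z₀ := by
      intro h; rw [h] at hz; exact absurd hz (ne_of_lt hz₀)
    have hms := mobius_sphere (z₀ := z₀) hz
    rw [← ha] at hms
    rw [hb]
    simp only [norm_div]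
    rw [← hms, div_self]
    simp only [ne_eq, norm_eq_zero, sub_ne_zero]
    exact hzz0
  set ζ : ℂ := b ξ with hζdef
  have hζ : ‖ζ‖ = 1 := hb1 ξ hξs
  -- injectivity at ξ
  have hbinj : ∀ z ∈ E, b z ≠ ζ := by
    intro z hz h
    have hzs : ‖z‖ = 1 := by simpa [mem_sphere_iff_norm] using hE hz
    have hd1 : 1 - a * z ≠ 0 := hden z hzs.le
    have hd2 : 1 - a * ξ ≠ 0 := hden ξ hξs.le
    rw [hb, hζdef] at h
    simp only at h
    rw [div_eq_div_iff hd1 hd2] at h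
    have haz₀ : 1 - a * z₀ ≠ 0 := hden z₀ hz₀.le
    have : (z - ξ) * (1 - a * z₀) = 0 := by linear_combination h
    rcases mul_eq_zero.mp this with h' | h'
    · have : z = ξ := by linear_combination h'
      exact hξE (this ▸ hz)
    · exact haz₀ h'
  rcases E.eq_empty_or_nonempty with rfl | hne
  · refine ⟨Polynomial.C (A:ℂ), by simp, ?_⟩
    simp only [Polynomial.eval_C, Complex.norm_real, Real.norm_eq_abs, abs_of_pos hApos]
    exact hMA
  -- minimum distance d
  have hEcomp : IsCompact E := (isCompact_sphere (0:ℂ) 1).of_isClosed_subset hEc hE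
  have hcontb : ContinuousOn (fun z => ‖b z - ζ‖) E := by
    apply ContinuousOn.norm
    apply ContinuousOn.sub _ continuousOn_const
    apply ContinuousOn.div (continuousOn_id.sub continuousOn_const)
      (continuousOn_const.sub (continuousOn_const.mul continuousOn_id))
    intro z hz
    have hz1 : ‖z‖ = 1 := by simpa [mem_sphere_iff_norm] using hE hz
    exact hden z hz1.le
  obtain ⟨zm, hzmE, hzmmin⟩ := hEcomp.exists_isMinOn hne hcontb
  set d : ℝ := ‖b zm - ζ‖ with hd
  have hdpos : 0 < d := by
    rw [hd, norm_pos_iff, sub_ne_zero]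
    exact hbinj zm hzmE
  have hdle : ∀ z ∈ E, d ≤ ‖b z - ζ‖ := fun z hz => hzmmin hz
  have hd2 : d ≤ 2 := by
    rw [hd]
    calc ‖b zm - ζ‖ ≤ ‖b zm‖ + ‖ζ‖ := norm_sub_le _ _
      _ = 2 := by
        have hzm1 : ‖zm‖ = 1 := by simpa [mem_sphere_iff_norm] using hE hzmE
        rw [hb1 zm hzm1, hζ]; norm_num
  -- parameters
  set lam : ℝ := Real.log (A * (Real.exp 1 + 1) + 1) with hlam
  have hargpos : 1 < A * (Real.exp 1 + 1) + 1 := by nlinarith [Real.exp_pos 1]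
  have hlampos : 0 < lam := Real.log_pos hargpos
  have hexplam : Real.exp lam = A * (Real.exp 1 + 1) + 1 := Real.exp_log (by linarith)
  set m : ℝ := min (d/4) (d^2/(16*lam)) with hm
  have hmpos : 0 < m := by
    apply lt_min (by linarith) (by positivity)
  have hmd4 : m ≤ d/4 := min_le_left _ _
  have hmd2 : m ≤ d^2/(16*lam) := min_le_right _ _
  set s : ℝ := 1 - m with hs
  have hs1 : s < 1 := by rw [hs]; linarith
  have hs0 : 0 < s := by rw [hs]; nlinarith
  set c : ℂ := (s:ℂ) * (starRingEnd ℂ) ζ with hcdef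
  have hnc : ‖c‖ = s := by
    rw [hcdef, norm_mul, RCLike.norm_conj, hζ, Complex.norm_real, Real.norm_eq_abs,
      abs_of_pos hs0, mul_one]
  set g : ℂ → ℂ := fun z => (lam:ℂ) * ((1 + c * b z)/(1 - c * b z)) with hg
  set G : ℂ → ℂ := fun z => Complex.exp (g z) with hG
  -- bound on E
  have hGE : ∀ z ∈ E, ‖G z‖ ≤ Real.exp 1 := by
    intro z hz
    have hz1 : ‖z‖ = 1 := by simpa [mem_sphere_iff_norm] using hE hz
    set w := b z with hw
    have hw1 : ‖w‖ = 1 := hb1 z hz1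
    set u := c * w with hu
    have hus : ‖u‖ = s := by rw [hu, norm_mul, hnc, hw1, mul_one]
    have h1u : d/2 ≤ ‖1 - u‖ := by
      have hζζ : ζ * (starRingEnd ℂ) ζ = 1 := by
        rw [Complex.mul_conj]; norm_cast; rw [normSq_norm, hζ]; norm_num
      have key : ζ * (1 - u) = ζ - (s:ℂ) * w := by
        rw [hu, hcdef]; linear_combination (-(s:ℂ) * w) * hζζ
      have hnorm1u : ‖1 - u‖ = ‖ζ - (s:ℂ) * w‖ := by
        rw [← key, norm_mul, hζ, one_mul]
      have htri : ‖ζ - w‖ ≤ ‖ζ - (s:ℂ)*w‖ + ‖(s:ℂ)*w - w‖ := by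
        simpa [dist_eq_norm] using dist_triangle ζ ((s:ℂ)*w) w
      have hsw : ‖(s:ℂ)*w - w‖ = 1 - s := by
        have : (s:ℂ)*w - w = ((s:ℂ) - 1) * w := by ring
        rw [this, norm_mul, hw1, mul_one]
        rw [show ((s:ℂ) - 1) = ((s - 1 : ℝ) : ℂ) by push_cast; ring]
        rw [Complex.norm_real, Real.norm_eq_abs, abs_of_nonpos (by linarith), neg_sub]
      have hdz : d ≤ ‖ζ - w‖ := by
        rw [norm_sub_rev]; exact hdle z hz
      rw [hnorm1u]
      have hms : 1 - s = m := by rw [hs]; ring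
      nlinarith [htri, hdz, hsw, hmd4, hdpos]
    have hune : u ≠ 1 := by
      intro h; rw [h, norm_one] at hus; linarith
    have hre : (g z).re = lam * ((1 - Complex.normSq u)/Complex.normSq (1-u)) := by
      have hgz : g z = (lam:ℂ) * ((1+u)/(1-u)) := by simp only [hg, hu, hw]
      rw [hgz, Complex.re_ofReal_mul, re_cayley hune]
    have hnormG : ‖G z‖ = Real.exp ((g z).re) := by
      simp only [hG, Complex.norm_exp]
    rw [hnormG, hre]
    apply Real.exp_le_exp.mpr
    have h1 : (d/2)^2 ≤ Complex.normSq (1 - u) := by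
      rw [normSq_norm]; nlinarith [h1u, hdpos]
    have h2 : 1 - Complex.normSq u = 1 - s^2 := by rw [normSq_norm, hus]
    rw [h2]
    have h4 : (0:ℝ) ≤ 1 - s^2 := by nlinarith
    have hd2pos : (0:ℝ) < (d/2)^2 := by positivity
    calc lam * ((1-s^2)/Complex.normSq (1-u)) ≤ lam * ((1-s^2)/((d/2)^2)) := by
          gcongr
      _ ≤ 1 := by
          rw [mul_div_assoc', div_le_one hd2pos]
          have hx1 : lam * m ≤ lam * (d^2/(16*lam)) :=
            mul_le_mul_of_nonneg_left hmd2 hlampos.le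
          have hx2 : lam * (d^2/(16*lam)) = d^2/16 := by field_simp
          have hx3 : 1 - s^2 = m * (1+s) := by rw [hs]; ring
          nlinarith [hmpos, hs0, hs1]
  -- value at z₀
  have hGz₀ : ‖G z₀‖ = Real.exp lam := by
    have hbz₀ : b z₀ = 0 := by rw [hb]; simp
    rw [hG, hg]
    simp only [hbz₀, mul_zero, add_zero, sub_zero, div_one, mul_one]
    rw [Complex.norm_exp, Complex.ofReal_re]
  -- the open set U
  set U : Set ℂ := {z | s * ‖z - z₀‖ < ‖1 - a * z‖} with hU
  have hUopen : IsOpen U := by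
    have : U = (fun z => s * ‖z - z₀‖ - ‖1 - a*z‖) ⁻¹' (Iio 0) := by
      ext z; simp [hU, sub_neg]
    rw [this]
    apply IsOpen.preimage _ isOpen_Iio
    apply Continuous.sub
    · exact continuous_const.mul ((continuous_id.sub continuous_const).norm)
    · exact ((continuous_const.sub (continuous_const.mul continuous_id)).norm)
  have hsubU : closedBall (0:ℂ) 1 ⊆ U := by
    intro z hz
    rw [mem_closedBall, dist_zero_right] at hz
    rw [hU, mem_setOf_eq]
    rcases eq_or_ne z z₀ with rfl | hne
    · rw [sub_self, norm_zero, mul_zero]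
      exact norm_pos_iff.mpr (hden z hz)
    · have h1 : ‖z - z₀‖ ≤ ‖1 - a*z‖ := by
        have := mobius_bound hz₀.le hz
        rwa [← ha] at this
      have h2 : s * ‖z-z₀‖ < ‖z-z₀‖ := by
        have : 0 < ‖z - z₀‖ := norm_pos_iff.mpr (sub_ne_zero.mpr hne)
        nlinarith
      linarith
  have hUprop : ∀ z ∈ U, (1 - a*z ≠ 0) ∧ ‖c * b z‖ < 1 := by
    intro z hz
    rw [hU, mem_setOf_eq] at hz
    have hd0 : 1 - a*z ≠ 0 := by
      intro h
      rw [h, norm_zero] at hz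
      nlinarith [norm_nonneg (z-z₀), hs0]
    refine ⟨hd0, ?_⟩
    have hpos : 0 < ‖1-a*z‖ := norm_pos_iff.mpr hd0
    rw [norm_mul, hnc, hb]
    simp only [norm_div]
    rw [mul_div_assoc', div_lt_one hpos]
    exact hz
  -- differentiability on U
  have hdiffG : DifferentiableOn ℂ G U := by
    have hbd : DifferentiableOn ℂ b U := by
      apply DifferentiableOn.div
        (differentiableOn_id.sub (differentiableOn_const _))
        ((differentiableOn_const _).sub ((differentiableOn_const _).mul differentiableOn_id))
      intro z hz; exact (hUprop z hz).1
    have hgd : DifferentiableOn ℂ g U := by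
      apply DifferentiableOn.const_mul
      apply DifferentiableOn.div
        ((differentiableOn_const 1).add (hbd.const_mul c))
        ((differentiableOn_const 1).sub (hbd.const_mul c))
      intro z hz h
      have hlt := (hUprop z hz).2
      have h' : 1 - c * b z = 0 := h
      have : c * b z = 1 := by linear_combination -h'
      rw [this, norm_one] at hlt
      exact lt_irrefl 1 hlt
    exact hgd.cexp
  -- radius
  obtain ⟨ε, hεpos, hεsub⟩ :=
    (isCompact_closedBall (0:ℂ) 1).exists_cthickening_subset_open hUopen hsubU
  have hball : closedBall (0:ℂ) (1+ε) ⊆ U := by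
    rw [show (1:ℝ)+ε = ε+1 by ring, ← cthickening_closedBall hεpos.le zero_le_one (0:ℂ)]
    exact hεsub
  set R : NNReal := ⟨1+ε, by positivity⟩ with hR
  have hdGR : DifferentiableOn ℂ G (closedBall 0 (R:ℝ)) := hdiffG.mono hball
  have hRpos : 0 < R := by
    rw [← NNReal.coe_lt_coe]; show (0:ℝ) < 1 + ε; linarith
  have hps := hdGR.hasFPowerSeriesOnBall hRpos
  set r' : NNReal := ⟨1+ε/2, by positivity⟩ with hr'def
  have hr' : (r' : ℝ≥0∞) < R := by
    rw [ENNReal.coe_lt_coe, ← NNReal.coe_lt_coe]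
    show (1+ε/2 : ℝ) < 1+ε; linarith
  have huniform := hps.tendstoUniformlyOn hr'
  rw [Metric.tendstoUniformlyOn_iff] at huniform
  obtain ⟨N, hN⟩ := (huniform 1 one_pos).exists
  set p := cauchyPowerSeries G 0 (R:ℝ) with hp
  set P₀ : Polynomial ℂ := ∑ k ∈ Finset.range N, Polynomial.C (p.coeff k) * Polynomial.X ^ k
    with hP₀
  have hevalP₀ : ∀ z : ℂ, P₀.eval z = p.partialSum N z := by
    intro z
    rw [hP₀, Polynomial.eval_finset_sum, FormalMultilinearSeries.partialSum]
    apply Finset.sum_congr rfl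
    intro k _
    rw [FormalMultilinearSeries.apply_eq_pow_smul_coeff, smul_eq_mul,
      Polynomial.eval_mul, Polynomial.eval_C, Polynomial.eval_pow, Polynomial.eval_X, mul_comm]
  have hsubball : closedBall (0:ℂ) 1 ⊆ ball (0:ℂ) (r' : ℝ) := by
    apply closedBall_subset_ball
    show (1:ℝ) < 1 + ε/2; linarith
  have hcompare : ∀ z : ℂ, ‖z‖ ≤ 1 → ‖P₀.eval z - G z‖ < 1 := by
    intro z hz
    have hzb : z ∈ ball (0:ℂ) (r' : ℝ) :=
      hsubball (by rwa [mem_closedBall, dist_zero_right])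
    have := hN z hzb
    rw [zero_add, dist_eq_norm, norm_sub_rev] at this
    rwa [hevalP₀]
  -- final polynomial
  have hE1pos : (0:ℝ) < Real.exp 1 + 1 := by positivity
  refine ⟨Polynomial.C (((Real.exp 1 + 1 : ℝ) : ℂ))⁻¹ * P₀, ?_, ?_⟩
  · intro z hz
    have hz1 : ‖z‖ = 1 := by simpa [mem_sphere_iff_norm] using hE hz
    rw [Polynomial.eval_mul, Polynomial.eval_C, norm_mul, norm_inv, Complex.norm_real,
      Real.norm_eq_abs, abs_of_pos hE1pos]
    have h1 : ‖P₀.eval z‖ ≤ Real.exp 1 + 1 := by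
      have hc1 := hcompare z hz1.le
      have hc2 := hGE z hz
      calc ‖P₀.eval z‖ = ‖(P₀.eval z - G z) + G z‖ := by ring_nf
        _ ≤ ‖P₀.eval z - G z‖ + ‖G z‖ := norm_add_le _ _
        _ ≤ Real.exp 1 + 1 := by linarith
    calc (Real.exp 1 + 1)⁻¹ * ‖P₀.eval z‖ ≤ (Real.exp 1 + 1)⁻¹ * (Real.exp 1 + 1) := by
          gcongr
      _ = 1 := inv_mul_cancel₀ hE1pos.ne'
  · rw [Polynomial.eval_mul, Polynomial.eval_C, norm_mul, norm_inv, Complex.norm_real,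
      Real.norm_eq_abs, abs_of_pos hE1pos]
    have h2 : Real.exp lam - 1 ≤ ‖P₀.eval z₀‖ := by
      have hc1 := hcompare z₀ hz₀.le
      have : ‖G z₀‖ - ‖P₀.eval z₀‖ ≤ ‖P₀.eval z₀ - G z₀‖ := by
        have := norm_sub_norm_le (G z₀) (P₀.eval z₀)
        calc ‖G z₀‖ - ‖P₀.eval z₀‖ ≤ ‖G z₀ - P₀.eval z₀‖ := norm_sub_norm_le _ _
          _ = ‖P₀.eval z₀ - G z₀‖ := norm_sub_rev _ _
      rw [hGz₀] at this
      linarith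
    rw [hexplam] at h2
    have : A * (Real.exp 1 + 1) ≤ ‖P₀.eval z₀‖ := by linarith
    calc M < A := hMA
      _ = (Real.exp 1 + 1)⁻¹ * (A * (Real.exp 1 + 1)) := by field_simp
      _ ≤ (Real.exp 1 + 1)⁻¹ * ‖P₀.eval z₀‖ := by gcongr

/-- Let `I ⊂ 𝕋` be relatively open with `σ(closure I) < 1`, let
`K = ((𝕋 \ I) × {0}) ∪ (closure I × 𝕋)`, and let `p = (z₀,w₀)` with `|z₀| ≤ 1`,
`z₀ ∉ closure I`, `0 < |w₀| ≤ 1`. Then `p` is not in the polynomially convex hull of `K`: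
there is a polynomial `Q ∈ ℂ[z,w]` with `|Q| ≤ 1` on `K` and `|Q(p)| > 1`. -/
theorem stmt_10 (I : Set ℂ) (hI : I ⊆ sphere (0 : ℂ) 1)
    (hIopen : ∃ U : Set ℂ, IsOpen U ∧ I = U ∩ sphere (0 : ℂ) 1)
    (hσ : sigmaT (closure I) < 1)
    (z₀ w₀ : ℂ) (hz₀ : ‖z₀‖ ≤ 1) (hz₀I : z₀ ∉ closure I)
    (hw₀pos : 0 < ‖w₀‖) (hw₀ : ‖w₀‖ ≤ 1) :
    ∃ Q : MvPolynomial (Fin 2) ℂ,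
      (∀ p ∈ ((sphere (0 : ℂ) 1 \ I) ×ˢ ({0} : Set ℂ)) ∪ (closure I ×ˢ sphere (0 : ℂ) 1),
        ‖MvPolynomial.eval ![p.1, p.2] Q‖ ≤ 1) ∧
      1 < ‖MvPolynomial.eval ![z₀, w₀] Q‖ := by
  have hE : closure I ⊆ sphere (0:ℂ) 1 := closure_minimal hI isClosed_sphere
  have hEc : IsClosed (closure I) := isClosed_closure
  -- a point of the circle outside closure I
  obtain ⟨ξ, hξs, hξE⟩ : ∃ ξ ∈ sphere (0:ℂ) 1, ξ ∉ closure I := by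
    by_contra h
    push_neg at h
    have : sphere (0:ℂ) 1 ⊆ closure I := h
    have := measure_mono (μ := sigmaT) this
    rw [sigmaT_sphere] at this
    exact absurd (lt_of_le_of_lt this hσ) (lt_irrefl _)
  have hz₀n : ‖z₀‖ ≤ 1 := by exact hz₀
  have hw₀n : 0 < ‖w₀‖ := by exact hw₀pos
  -- the one-variable polynomial
  obtain ⟨P, hP1, hP2⟩ : ∃ P : Polynomial ℂ,
      (∀ z ∈ closure I, ‖P.eval z‖ ≤ 1) ∧ ‖w₀‖⁻¹ < ‖P.eval z₀‖ := by
    rcases lt_or_eq_of_le hz₀n with h | h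
    · exact interior_case (closure I) hE hEc ξ (by simpa [mem_sphere_iff_norm] using hξs) hξE
        z₀ h _
    · exact peak_case (closure I) hE hEc z₀ h hz₀I _
  refine ⟨Polynomial.aeval (MvPolynomial.X 0) P * MvPolynomial.X 1, ?_, ?_⟩
  · rintro ⟨z, w⟩ hp
    rw [map_mul, transfer]
    simp only [Matrix.cons_val_zero, MvPolynomial.eval_X, Matrix.cons_val_one, Matrix.head_cons]
    rcases hp with hp | hp
    · rcases hp with ⟨_, hw⟩
      simp only [mem_singleton_iff] at hw
      simp [hw]
    · rcases hp with ⟨hz, hw⟩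
      rw [norm_mul]
      have h1 : ‖Polynomial.eval z P‖ ≤ 1 := hP1 z hz
      have h2 : ‖w‖ = 1 := by simpa [mem_sphere_iff_norm] using hw
      rw [h2, mul_one]
      exact h1
  · rw [map_mul, transfer]
    simp only [Matrix.cons_val_zero, MvPolynomial.eval_X, Matrix.cons_val_one, Matrix.head_cons]
    rw [norm_mul]
    calc (1:ℝ) = ‖w₀‖⁻¹ * ‖w₀‖ := (inv_mul_cancel₀ hw₀n.ne').symm
      _ < ‖Polynomial.eval z₀ P‖ * ‖w₀‖ := by gcongr
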